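/- Convertibility of binder-headed types is componentwise: Qx:A.B ≃ Qx:A'.B' if and only if A ≃ A' and B ≃ B', for Q ∈ {Π, Σ}; in particular a Π-type is never convertible to a Σ-type or to a universe. -/

import Mathlib

namespace ECC

/-- Terms of Luo's Extended Calculus of Constructions, in de Bruijn representation. -/
inductive Term : Type
  | var   : ℕ → Term
  | prop  : Term
  | type  : ℕ → Term
  | pi    : Term → Term → Term
  | sigma : Term → Term → Term
  | lam   : Term → Term → Term
  | app   : Term → Term → Term
  | pair  : Term → Term → Term → Term   -- ⟨M, N⟩_B with type annotation B
  | proj1 : Term → Term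
  | proj2 : Term → Term
deriving DecidableEq

/-- Lift (shift by `d`) all de Bruijn indices ≥ `k`. -/
def lift (d : ℕ) : ℕ → Term → Term
  | k, .var n       => if n < k then .var n else .var (n + d)
  | _, .prop        => .prop
  | _, .type j      => .type j
  | k, .pi A B      => .pi (lift d k A) (lift d (k+1) B)
  | k, .sigma A B   => .sigma (lift d k A) (lift d (k+1) B)
  | k, .lam A M     => .lam (lift d k A) (lift d (k+1) M)
  | k, .app M N     => .app (lift d k M) (lift d k N)
  | k, .pair M N B  => .pair (lift d k M) (lift d k N) (lift d k B)
  | k, .proj1 M     => .proj1 (lift d k M)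
  | k, .proj2 M     => .proj2 (lift d k M)

/-- Capture-avoiding substitution `[N/x]A` of the term `N` for the variable `x` in `A`. -/
def subst (N : Term) : ℕ → Term → Term
  | k, .var n       => if n < k then .var n else if n = k then lift k 0 N else .var (n - 1)
  | _, .prop        => .prop
  | _, .type j      => .type j
  | k, .pi A B      => .pi (subst N k A) (subst N (k+1) B)
  | k, .sigma A B   => .sigma (subst N k A) (subst N (k+1) B)
  | k, .lam A M     => .lam (subst N k A) (subst N (k+1) M)
  | k, .app M M'    => .app (subst N k M) (subst N k M')
  | k, .pair M M' B => .pair (subst N k M) (subst N k M') (subst N k B)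
  | k, .proj1 M     => .proj1 (subst N k M)
  | k, .proj2 M     => .proj2 (subst N k M)

/-- `[N/x₀]B` : substitution for the outermost bound variable. -/
def subst0 (B N : Term) : Term := subst N 0 B

/-- One-step reduction (β together with the projection reductions, closed under all
term-formation congruences). -/
inductive Red : Term → Term → Prop
  | beta    : Red (.app (.lam A M) N) (subst0 M N)
  | pr1     : Red (.proj1 (.pair M N B)) M
  | pr2     : Red (.proj2 (.pair M N B)) N
  | piL     : Red A A' → Red (.pi A B) (.pi A' B)
  | piR     : Red B B' → Red (.pi A B) (.pi A B')
  | sigmaL  : Red A A' → Red (.sigma A B) (.sigma A' B)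
  | sigmaR  : Red B B' → Red (.sigma A B) (.sigma A B')
  | lamL    : Red A A' → Red (.lam A M) (.lam A' M)
  | lamR    : Red M M' → Red (.lam A M) (.lam A M')
  | appL    : Red M M' → Red (.app M N) (.app M' N)
  | appR    : Red N N' → Red (.app M N) (.app M N')
  | pairL   : Red M M' → Red (.pair M N B) (.pair M' N B)
  | pairR   : Red N N' → Red (.pair M N B) (.pair M N' B)
  | pairB   : Red B B' → Red (.pair M N B) (.pair M N B')
  | proj1C  : Red M M' → Red (.proj1 M) (.proj1 M')
  | proj2C  : Red M M' → Red (.proj2 M) (.proj2 M')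

/-- Conversion `≃` : the equivalence relation generated by reduction. -/
def Conv : Term → Term → Prop := Relation.EqvGen Red

/-- `A` has a normal form. -/
def HasNF (A : Term) : Prop :=
  ∃ B, Relation.ReflTransGen Red A B ∧ ∀ C, ¬ Red B C

/-- `𝒯` : the set of normalisable terms. -/
def Tset : Set Term := {A | HasNF A}

/-- Universes are `Prop` and the `Type_j`. -/
def IsUniv (T : Term) : Prop := T = .prop ∨ ∃ j, T = .type j

/-- The cumulativity relation `⪯` : the smallest preorder containing conversion,
the universe order, congruence for Π in the codomain, and congruence for Σ in both
components. -/
inductive Cum : Term → Term → Prop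
  | conv     : Conv A B → Cum A B
  | propType : Cum .prop (.type 0)
  | typeType : j ≤ k → Cum (.type j) (.type k)
  | pi       : Conv A A' → Cum B B' → Cum (.pi A B) (.pi A' B')
  | sigma    : Cum A A' → Cum B B' → Cum (.sigma A B) (.sigma A' B')
  | trans    : Cum A B → Cum B C → Cum A C

/-- The strict cumulativity relation `≺` : `A ⪯ B` and `A ≄ B`. -/
def SCum (A B : Term) : Prop := Cum A B ∧ ¬ Conv A B

/-- The stratified cumulativity relations `⪯ᵢ`. -/
inductive CumL : ℕ → Term → Term → Prop
  | conv     : Conv A B → CumL i A B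
  | propType : CumL i .prop (.type j)
  | typeType : j < k → CumL i (.type j) (.type k)
  | succ     : CumL i A B → CumL (i+1) A B
  | pi       : Conv M (.pi A B) → Conv N (.pi A' B') → Conv A A' → CumL i B B' →
               CumL (i+1) M N
  | sigma    : Conv M (.sigma A B) → Conv N (.sigma A' B') → CumL i A A' → CumL i B B' →
               CumL (i+1) M N

/-- Strict stratified cumulativity `≺ᵢ`. -/
def SCumL (i : ℕ) (A B : Term) : Prop := CumL i A B ∧ ¬ Conv A B

/-- Is the outermost symbol of a term Π or Σ? -/
def BinderHeaded : Term → Prop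
  | .pi _ _    => True
  | .sigma _ _ => True
  | _          => False

/-- The base stratum: normalisable terms not convertible to a binder-headed
normalisable term. -/
def Base : Set Term :=
  {T | HasNF T ∧ ¬ ∃ B, HasNF B ∧ BinderHeaded B ∧ Conv T B}

/-- The stratification `(Π_n, Σ_n)` of `𝒯`. -/
def Strata : ℕ → Set Term × Set Term
  | 0 => (Base, Base)
  | n+1 =>
    ({T | ∃ k l, ∃ _ : k + l = n, ∃ A B, HasNF (Term.pi A B) ∧ Conv T (Term.pi A B) ∧
        A ∈ (Strata k).1 ∪ (Strata k).2 ∧ B ∈ (Strata l).1 ∪ (Strata l).2},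
     {T | ∃ k l, ∃ _ : k + l = n, ∃ A B, HasNF (Term.sigma A B) ∧ Conv T (Term.sigma A B) ∧
        A ∈ (Strata k).1 ∪ (Strata k).2 ∧ B ∈ (Strata l).1 ∪ (Strata l).2})
termination_by n => n
decreasing_by all_goals omega

/-- The stratum `Π_n`. -/
def PiStr (n : ℕ) : Set Term := (Strata n).1

/-- The stratum `Σ_n`. -/
def SigStr (n : ℕ) : Set Term := (Strata n).2

/-- The specification of the rank function `φ : 𝒯 → ω`. -/
def PhiSpec (φ : Term → ℕ) : Prop :=
  (∀ M N, HasNF M → HasNF N → Conv M N → φ M = φ N) ∧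
  (∀ T, HasNF T → Conv T .prop → φ T = 2) ∧
  (∀ T j, HasNF T → Conv T (.type j) → φ T = 3 + j) ∧
  (∀ T, T ∈ PiStr 0 → ¬ Conv T .prop → (∀ j, ¬ Conv T (.type j)) → φ T = 1) ∧
  (∀ T A B, HasNF T → (Conv T (.pi A B) ∨ Conv T (.sigma A B)) → φ T = φ A * φ B) ∧
  (∀ T, HasNF T → 0 < φ T)

mutual
/-- Valid contexts of ECC (de Bruijn: the head of the list is the most recent entry). -/
inductive Valid : List Term → Prop
  | nil  : Valid []
  | cons : Typing Γ A (.type j) → Valid (A :: Γ)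

/-- The typing judgement `Γ ⊢ M : A` of ECC. -/
inductive Typing : List Term → Term → Term → Prop
  | prop  : Valid Γ → Typing Γ .prop (.type 0)
  | type  : Valid Γ → Typing Γ (.type j) (.type (j+1))
  | var   : Valid Γ → Γ[n]? = some A → Typing Γ (.var n) (lift (n+1) 0 A)
  | pi1   : Typing Γ A (.type j) → Typing (A :: Γ) B .prop →
            Typing Γ (.pi A B) .prop
  | pi2   : Typing Γ A (.type j) → Typing (A :: Γ) B (.type j) →
            Typing Γ (.pi A B) (.type j)
  | sig   : Typing Γ A (.type j) → Typing (A :: Γ) B (.type j) →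
            Typing Γ (.sigma A B) (.type j)
  | lam   : Typing (A :: Γ) M B → Typing Γ (.lam A M) (.pi A B)
  | app   : Typing Γ M (.pi A B) → Typing Γ N A → Typing Γ (.app M N) (subst0 B N)
  | pair  : Typing Γ M A → Typing Γ N (subst0 B M) → Typing (A :: Γ) B (.type j) →
            Typing Γ (.pair M N (.sigma A B)) (.sigma A B)
  | proj1 : Typing Γ M (.sigma A B) → Typing Γ (.proj1 M) A
  | proj2 : Typing Γ M (.sigma A B) → Typing Γ (.proj2 M) (subst0 B (.proj1 M))
  | cum   : Typing Γ M A → Typing Γ B (.type j) → Cum A B → Typing Γ M B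
end

/-- `Type_j` for `j ∈ ℤ`, with the convention `Type_{-1} = Prop`. -/
def TType (j : ℤ) : Term := if j < 0 then .prop else .type j.toNat

/-- The typing judgement of the restricted system `ECC⁻`: the rules
`(Π2)(Σ)(app)(pair)(⪯)` of ECC are replaced by `(Π2')(Σ')(app')(pair')` and `(≃)_ρ`. -/
inductive TypingM : List Term → Term → Term → Prop
  | prop  : Valid Γ → TypingM Γ .prop (.type 0)
  | type  : Valid Γ → TypingM Γ (.type j) (.type (j+1))
  | var   : Valid Γ → Γ[n]? = some A → TypingM Γ (.var n) (lift (n+1) 0 A)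
  | pi1   : TypingM Γ A (.type j) → TypingM (A :: Γ) B .prop →
            TypingM Γ (.pi A B) .prop
  | pi2'  : TypingM Γ A (TType j) → TypingM (A :: Γ) B (TType k) → 0 ≤ k →
            TypingM Γ (.pi A B) (TType (max (max j k) 0))
  | sig'  : TypingM Γ A (TType j) → TypingM (A :: Γ) B (TType k) →
            TypingM Γ (.sigma A B) (TType (max (max j k) 0))
  | lam   : TypingM (A :: Γ) M B → TypingM Γ (.lam A M) (.pi A B)
  | app'  : TypingM Γ M (.pi A B) → TypingM Γ N A' → Cum A' A →
            TypingM Γ (.app M N) (subst0 B N)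
  | pair' : TypingM Γ M A → TypingM Γ N C → TypingM (A' :: Γ) B' (.type j) →
            Cum A A' → Cum C (subst0 B' M) →
            TypingM Γ (.pair M N (.sigma A' B')) (.sigma A' B')
  | proj1 : TypingM Γ M (.sigma A B) → TypingM Γ (.proj1 M) A
  | proj2 : TypingM Γ M (.sigma A B) → TypingM Γ (.proj2 M) (subst0 B (.proj1 M))
  | conv  : TypingM Γ M A → Conv A A' → Typing Γ A' (.type j) → TypingM Γ M A'

end ECC

/-!
Conversion coincides with joinability under multi-step reduction, by the Church–Rosser theorem,
proved à la Takahashi: parallel reduction `Par` lies between one-step and multi-step reduction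
and has the diamond property, because every parallel reduct of `M` parallel-reduces to the
complete development `cd M`. A reduct of `Π x:A. B` (resp. `Σ x:A. B`) is again of that form with
componentwise reducts, and universes are normal forms; so a common reduct of two binder-headed
types has their binder and common reducts of the components, and no universe is a common
reduct with a Π-type.
-/

namespace ECC

theorem lift_var (d k n : ℕ) : lift d k (.var n) = .var (if n < k then n else n + d) := by
  simp only [lift]; split_ifs <;> rfl

theorem lift_lift_comm (M : Term) {i j : ℕ} (d d' : ℕ) (h : j ≤ i) :
    lift d (i + d') (lift d' j M) = lift d' j (lift d i M) := by
  induction M generalizing i j with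
  | var n => simp only [lift_var, Term.var.injEq]; split_ifs <;> omega
  | pi A B ihA ihB | sigma A B ihA ihB | lam A B ihA ihB =>
      have hB := ihB (i := i + 1) (j := j + 1) (by omega)
      rw [Nat.add_right_comm] at hB
      simp only [lift, ihA h, hB]
  | _ => simp only [lift, *]

theorem lift_lift_add (M : Term) {i j : ℕ} (d d' : ℕ) (hj : j ≤ i) (hi : i ≤ j + d') :
    lift d i (lift d' j M) = lift (d + d') j M := by
  induction M generalizing i j with
  | var n => simp only [lift_var, Term.var.injEq]; split_ifs <;> omega
  | pi A B ihA ihB | sigma A B ihA ihB | lam A B ihA ihB =>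
      simp only [lift, ihA hj hi, ihB (by omega : j + 1 ≤ i + 1) (by omega)]
  | _ => simp only [lift, *]

theorem subst_var (N : Term) (k n : ℕ) :
    subst N k (.var n) = if n < k then .var n else if n = k then lift k 0 N else .var (n - 1) := by
  rw [subst]

theorem subst_lift_of_le_of_lt (M N : Term) {i j d : ℕ} (hj : j ≤ i) (hi : i < j + d) :
    subst N i (lift d j M) = lift (d - 1) j M := by
  induction M generalizing i j with
  | var n =>
      by_cases hn : n < j
      · simp [lift_var, subst_var, hn, show n < i by omega]
      · simp [lift_var, subst_var, hn, show ¬ n + d < i by omega, show n + d ≠ i by omega]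
        omega
  | pi A B ihA ihB | sigma A B ihA ihB | lam A B ihA ihB =>
      simp only [lift, subst, ihA hj hi, ihB (by omega : j + 1 ≤ i + 1) (by omega)]
  | _ => simp only [lift, subst, *]

theorem subst_lift_comm (M N : Term) {i j k : ℕ} (h : i + j ≤ k) :
    subst N k (lift j i M) = lift j i (subst N (k - j) M) := by
  induction M generalizing i k with
  | var n =>
      by_cases hn : n < i
      · simp [lift_var, subst_var, hn, show n < k by omega, show n < k - j by omega]
      · by_cases h1 : n < k - j
        · simp [lift_var, subst_var, hn, h1, show n + j < k by omega]
        · by_cases h2 : n = k - j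
          · subst h2
            simp [lift_var, subst_var, hn, show k - j + j = k by omega,
              lift_lift_add N j (k - j) (Nat.zero_le i) (by omega : i ≤ 0 + (k - j)),
              show j + (k - j) = k by omega]
          · simp [lift_var, subst_var, hn, h1, h2, show ¬ n + j < k by omega,
              show n + j ≠ k by omega, show ¬ n - 1 < i by omega]
            omega
  | pi A B ihA ihB | sigma A B ihA ihB | lam A B ihA ihB =>
      have hB := ihB (i := i + 1) (k := k + 1) (by omega)
      rw [show k + 1 - j = k - j + 1 by omega] at hB
      simp only [lift, subst, ihA h, hB]
  | _ => simp only [lift, subst, *]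

theorem lift_subst_comm (M N : Term) {j k : ℕ} (d : ℕ) (h : j ≤ k) :
    lift d k (subst N j M) = subst (lift d (k - j) N) j (lift d (k + 1) M) := by
  induction M generalizing j k with
  | var n =>
      rcases lt_trichotomy n j with hn | rfl | hn
      · simp [lift_var, subst_var, hn, show n < k by omega, show n < k + 1 by omega]
      · have := lift_lift_comm N d n (i := k - n) (Nat.zero_le _)
        simp_all [lift_var, subst_var, show n < k + 1 by omega, show k - n + n = k by omega]
      · by_cases hk : n - 1 < k
        · simp [lift_var, subst_var, hk, show n < k + 1 by omega, show ¬ n < j by omega,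
            show n ≠ j by omega]
        · simp [lift_var, subst_var, hk, show ¬ n < k + 1 by omega, show ¬ n < j by omega,
            show n ≠ j by omega, show ¬ n + d < j by omega, show n + d ≠ j by omega]
          omega
  | pi A B ihA ihB | sigma A B ihA ihB | lam A B ihA ihB =>
      have hB := ihB (j := j + 1) (k := k + 1) (by omega)
      rw [show k + 1 - (j + 1) = k - j by omega] at hB
      simp only [lift, subst, ihA h, hB]
  | _ => simp only [lift, subst, *]

theorem subst_subst_comm (M N P : Term) {j k : ℕ} (h : j ≤ k) :
    subst N k (subst P j M) = subst (subst N (k - j) P) j (subst N (k + 1) M) := by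
  induction M generalizing j k with
  | var n =>
      rcases lt_trichotomy n j with hn | rfl | hn
      · simp [subst_var, hn, show n < k by omega, show n < k + 1 by omega]
      · simp [subst_var, show n < k + 1 by omega,
          subst_lift_comm P N (i := 0) (j := n) (k := k) (by omega)]
      · rcases lt_trichotomy (n - 1) k with hk | hk | hk
        · simp [subst_var, hk, show n < k + 1 by omega, show ¬ n < j by omega,
            show n ≠ j by omega]
        · obtain rfl : n = k + 1 := by omega
          simp [subst_var, show ¬ k + 1 < j by omega, show k + 1 ≠ j by omega,
            subst_lift_of_le_of_lt N (subst N (k - j) P) (i := j) (j := 0) (d := k + 1)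
              (by omega) (by omega)]
        · simp [subst_var, show ¬ n - 1 < k by omega, show ¬ n < k + 1 by omega,
            show n - 1 ≠ k by omega, show ¬ n < j by omega, show n ≠ j by omega,
            show n ≠ k + 1 by omega, show ¬ n - 1 < j by omega, show n - 1 ≠ j by omega]
  | pi A B ihA ihB | sigma A B ihA ihB | lam A B ihA ihB =>
      have hB := ihB (j := j + 1) (k := k + 1) (by omega)
      rw [show k + 1 - (j + 1) = k - j by omega] at hB
      simp only [subst, ihA h, hB]
  | _ => simp only [subst, *]

inductive Par : Term → Term → Prop
  | var   : Par (.var n) (.var n)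
  | prop  : Par .prop .prop
  | type  : Par (.type j) (.type j)
  | pi    : Par A A' → Par B B' → Par (.pi A B) (.pi A' B')
  | sigma : Par A A' → Par B B' → Par (.sigma A B) (.sigma A' B')
  | lam   : Par A A' → Par M M' → Par (.lam A M) (.lam A' M')
  | app   : Par M M' → Par N N' → Par (.app M N) (.app M' N')
  | pair  : Par M M' → Par N N' → Par B B' → Par (.pair M N B) (.pair M' N' B')
  | proj1 : Par M M' → Par (.proj1 M) (.proj1 M')
  | proj2 : Par M M' → Par (.proj2 M) (.proj2 M')
  | beta  : Par M M' → Par N N' → Par (.app (.lam A M) N) (subst0 M' N')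
  | pr1   : Par M M' → Par (.proj1 (.pair M N B)) M'
  | pr2   : Par N N' → Par (.proj2 (.pair M N B)) N'

abbrev MRed : Term → Term → Prop := Relation.ReflTransGen Red

@[refl]
theorem Par.refl : ∀ M : Term, Par M M
  | .var _ => .var
  | .prop => .prop
  | .type _ => .type
  | .pi A B => .pi (.refl A) (.refl B)
  | .sigma A B => .sigma (.refl A) (.refl B)
  | .lam A M => .lam (.refl A) (.refl M)
  | .app M N => .app (.refl M) (.refl N)
  | .pair M N B => .pair (.refl M) (.refl N) (.refl B)
  | .proj1 M => .proj1 (.refl M)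
  | .proj2 M => .proj2 (.refl M)

theorem Red.par {M N : Term} (h : Red M N) : Par M N := by
  induction h with
  | beta => exact .beta (.refl _) (.refl _)
  | pr1 => exact .pr1 (.refl _)
  | pr2 => exact .pr2 (.refl _)
  | piL _ ih => exact .pi ih (.refl _)
  | piR _ ih => exact .pi (.refl _) ih
  | sigmaL _ ih => exact .sigma ih (.refl _)
  | sigmaR _ ih => exact .sigma (.refl _) ih
  | lamL _ ih => exact .lam ih (.refl _)
  | lamR _ ih => exact .lam (.refl _) ih
  | appL _ ih => exact .app ih (.refl _)
  | appR _ ih => exact .app (.refl _) ih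
  | pairL _ ih => exact .pair ih (.refl _) (.refl _)
  | pairR _ ih => exact .pair (.refl _) ih (.refl _)
  | pairB _ ih => exact .pair (.refl _) (.refl _) ih
  | proj1C _ ih => exact .proj1 ih
  | proj2C _ ih => exact .proj2 ih

theorem MRed.congr {f : Term → Term} (hf : ∀ {M M'}, Red M M' → Red (f M) (f M'))
    {M M' : Term} (h : MRed M M') : MRed (f M) (f M') :=
  h.lift f fun _ _ => hf

theorem MRed.congr₂ {f : Term → Term → Term}
    (hf₁ : ∀ {M M' N}, Red M M' → Red (f M N) (f M' N))
    (hf₂ : ∀ {M N N'}, Red N N' → Red (f M N) (f M N'))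
    {M M' N N' : Term} (hM : MRed M M') (hN : MRed N N') : MRed (f M N) (f M' N') :=
  (hM.congr hf₁).trans (hN.congr hf₂)

theorem Par.mred {M N : Term} (h : Par M N) : MRed M N := by
  induction h with
  | var | prop | type => rfl
  | pi _ _ ihA ihB => exact MRed.congr₂ (f := .pi) .piL .piR ihA ihB
  | sigma _ _ ihA ihB => exact MRed.congr₂ (f := .sigma) .sigmaL .sigmaR ihA ihB
  | lam _ _ ihA ihM => exact MRed.congr₂ (f := .lam) .lamL .lamR ihA ihM
  | app _ _ ihM ihN => exact MRed.congr₂ (f := .app) .appL .appR ihM ihN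
  | @pair _ _ _ _ B _ _ _ _ ihM ihN ihB =>
      exact (MRed.congr₂ (f := (.pair · · B)) .pairL .pairR ihM ihN).trans
        (MRed.congr (f := .pair _ _) .pairB ihB)
  | proj1 _ ih => exact MRed.congr (f := .proj1) .proj1C ih
  | proj2 _ ih => exact MRed.congr (f := .proj2) .proj2C ih
  | @beta _ _ _ _ A _ _ ihM ihN =>
      exact (MRed.congr₂ (f := .app) .appL .appR (MRed.congr (f := .lam A) .lamR ihM) ihN).tail
        .beta
  | @pr1 _ _ N B _ ih =>
      exact (MRed.congr (f := .proj1) .proj1C (MRed.congr (f := (.pair · N B)) .pairL ih)).tail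
        .pr1
  | @pr2 _ _ M B _ ih =>
      exact (MRed.congr (f := .proj2) .proj2C (MRed.congr (f := (.pair M · B)) .pairR ih)).tail
        .pr2

theorem Par.lift (d : ℕ) {M M' : Term} (h : Par M M') (k : ℕ) :
    Par (lift d k M) (lift d k M') := by
  induction h generalizing k with
  | var | prop | type => rfl
  | pi _ _ ihA ihB => exact .pi (ihA k) (ihB (k + 1))
  | sigma _ _ ihA ihB => exact .sigma (ihA k) (ihB (k + 1))
  | lam _ _ ihA ihM => exact .lam (ihA k) (ihM (k + 1))
  | app _ _ ihM ihN => exact .app (ihM k) (ihN k)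
  | pair _ _ _ ihM ihN ihB => exact .pair (ihM k) (ihN k) (ihB k)
  | proj1 _ ih => exact .proj1 (ih k)
  | proj2 _ ih => exact .proj2 (ih k)
  | beta _ _ ihM ihN =>
      rw [subst0, lift_subst_comm _ _ d (Nat.zero_le k), Nat.sub_zero]
      exact .beta (ihM (k + 1)) (ihN k)
  | pr1 _ ih => exact .pr1 (ih k)
  | pr2 _ ih => exact .pr2 (ih k)

theorem Par.subst {M M' N N' : Term} (h : Par M M') (hN : Par N N') (k : ℕ) :
    Par (subst N k M) (subst N' k M') := by
  induction h generalizing k with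
  | @var n =>
      rw [subst_var, subst_var]
      split_ifs
      exacts [.var, hN.lift k 0, .var]
  | prop | type => rfl
  | pi _ _ ihA ihB => exact .pi (ihA k) (ihB (k + 1))
  | sigma _ _ ihA ihB => exact .sigma (ihA k) (ihB (k + 1))
  | lam _ _ ihA ihM => exact .lam (ihA k) (ihM (k + 1))
  | app _ _ ihM ihN => exact .app (ihM k) (ihN k)
  | pair _ _ _ ihM ihN ihB => exact .pair (ihM k) (ihN k) (ihB k)
  | proj1 _ ih => exact .proj1 (ih k)
  | proj2 _ ih => exact .proj2 (ih k)
  | beta _ _ ihM ihP =>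
      rw [subst0, subst_subst_comm _ _ _ (Nat.zero_le k), Nat.sub_zero]
      exact .beta (ihM (k + 1)) (ihP k)
  | pr1 _ ih => exact .pr1 (ih k)
  | pr2 _ ih => exact .pr2 (ih k)

def cd : Term → Term
  | .app (.lam _ M) N => subst0 (cd M) (cd N)
  | .proj1 (.pair M _ _) => cd M
  | .proj2 (.pair _ N _) => cd N
  | .var n => .var n
  | .prop => .prop
  | .type j => .type j
  | .pi A B => .pi (cd A) (cd B)
  | .sigma A B => .sigma (cd A) (cd B)
  | .lam A M => .lam (cd A) (cd M)
  | .app M N => .app (cd M) (cd N)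
  | .pair M N B => .pair (cd M) (cd N) (cd B)
  | .proj1 M => .proj1 (cd M)
  | .proj2 M => .proj2 (cd M)

theorem Par.par_cd {M N : Term} (h : Par M N) : Par N (cd M) := by
  induction h with
  | var | prop | type => exact .refl _
  | pi _ _ ihA ihB => exact .pi ihA ihB
  | sigma _ _ ihA ihB => exact .sigma ihA ihB
  | lam _ _ ihA ihM => exact .lam ihA ihM
  | pair _ _ _ ihM ihN ihB => exact .pair ihM ihN ihB
  | @app M _ _ _ hM _ ihM ihN =>
      cases M
      case lam =>
        cases hM with
        | lam =>
          simp only [cd] at ihM ⊢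
          cases ihM with
          | lam _ ihR => exact .beta ihR ihN
      all_goals exact .app ihM ihN
  | @proj1 M _ hM ihM =>
      cases M
      case pair =>
        cases hM with
        | pair =>
          simp only [cd] at ihM ⊢
          cases ihM with
          | pair ihP _ _ => exact .pr1 ihP
      all_goals exact .proj1 ihM
  | @proj2 M _ hM ihM =>
      cases M
      case pair =>
        cases hM with
        | pair =>
          simp only [cd] at ihM ⊢
          cases ihM with
          | pair _ ihQ _ => exact .pr2 ihQ
      all_goals exact .proj2 ihM
  | beta _ _ ihM ihN => exact ihM.subst ihN 0
  | pr1 _ ih | pr2 _ ih => exact ih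

theorem conv_iff_join {M N : Term} : Conv M N ↔ Relation.Join MRed M N := by
  constructor
  · intro h
    have hPar : Equivalence (Relation.Join (Relation.ReflTransGen Par)) :=
      Relation.equivalence_join_reflTransGen (r := Par) fun _ _ _ hab hac =>
        ⟨_, .single hab.par_cd, .single hac.par_cd⟩
    obtain ⟨Z, hM, hN⟩ :=
      hPar.eqvGen_iff.mp (Relation.EqvGen.mono (fun _ b h => ⟨b, .single h.par, .refl⟩) _ _ h)
    have hle : Relation.ReflTransGen Par ≤ MRed :=
      Relation.reflTransGen_le_of_le fun _ _ h => h.mred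
    exact ⟨Z, hle _ _ hM, hle _ _ hN⟩
  · exact Relation.join_le_of_equivalence_of_le (Relation.EqvGen.is_equivalence Red)
      (Relation.EqvGen.reflTransGen_le_eqvGen Red) _ _

theorem MRed.pi_inv {A B T : Term} (h : MRed (.pi A B) T) :
    ∃ A' B', T = .pi A' B' ∧ MRed A A' ∧ MRed B B' := by
  induction h with
  | refl => exact ⟨A, B, rfl, .refl, .refl⟩
  | tail _ hstep ih =>
      obtain ⟨A', B', rfl, hA, hB⟩ := ih
      cases hstep with
      | piL h => exact ⟨_, _, rfl, hA.tail h, hB⟩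
      | piR h => exact ⟨_, _, rfl, hA, hB.tail h⟩

theorem MRed.sigma_inv {A B T : Term} (h : MRed (.sigma A B) T) :
    ∃ A' B', T = .sigma A' B' ∧ MRed A A' ∧ MRed B B' := by
  induction h with
  | refl => exact ⟨A, B, rfl, .refl, .refl⟩
  | tail _ hstep ih =>
      obtain ⟨A', B', rfl, hA, hB⟩ := ih
      cases hstep with
      | sigmaL h => exact ⟨_, _, rfl, hA.tail h, hB⟩
      | sigmaR h => exact ⟨_, _, rfl, hA, hB.tail h⟩

theorem MRed.eq_of_normal {M N : Term} (hM : ∀ T, ¬ Red M T) (h : MRed M N) : N = M := by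
  rcases h.cases_head with rfl | ⟨T, hT, -⟩
  exacts [rfl, (hM T hT).elim]

theorem IsUniv.normal {U : Term} (hU : IsUniv U) (T : Term) : ¬ Red U T := by
  rcases hU with rfl | ⟨j, rfl⟩ <;> nofun

theorem conv_pi_iff {A B A' B' : Term} :
    Conv (.pi A B) (.pi A' B') ↔ Conv A A' ∧ Conv B B' := by
  simp only [conv_iff_join]
  constructor
  · rintro ⟨Z, h, h'⟩
    obtain ⟨A₀, B₀, rfl, hA, hB⟩ := h.pi_inv
    obtain ⟨_, _, hZ, hA', hB'⟩ := h'.pi_inv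
    cases hZ
    exact ⟨⟨A₀, hA, hA'⟩, ⟨B₀, hB, hB'⟩⟩
  · rintro ⟨⟨A₀, hA, hA'⟩, ⟨B₀, hB, hB'⟩⟩
    exact ⟨.pi A₀ B₀, MRed.congr₂ (f := .pi) .piL .piR hA hB,
      MRed.congr₂ (f := .pi) .piL .piR hA' hB'⟩

theorem conv_sigma_iff {A B A' B' : Term} :
    Conv (.sigma A B) (.sigma A' B') ↔ Conv A A' ∧ Conv B B' := by
  simp only [conv_iff_join]
  constructor
  · rintro ⟨Z, h, h'⟩
    obtain ⟨A₀, B₀, rfl, hA, hB⟩ := h.sigma_inv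
    obtain ⟨_, _, hZ, hA', hB'⟩ := h'.sigma_inv
    cases hZ
    exact ⟨⟨A₀, hA, hA'⟩, ⟨B₀, hB, hB'⟩⟩
  · rintro ⟨⟨A₀, hA, hA'⟩, ⟨B₀, hB, hB'⟩⟩
    exact ⟨.sigma A₀ B₀, MRed.congr₂ (f := .sigma) .sigmaL .sigmaR hA hB,
      MRed.congr₂ (f := .sigma) .sigmaL .sigmaR hA' hB'⟩

theorem not_conv_pi_sigma {A B A' B' : Term} : ¬ Conv (.pi A B) (.sigma A' B') := by
  intro h
  obtain ⟨Z, h, h'⟩ := conv_iff_join.mp h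
  obtain ⟨_, _, rfl, -⟩ := h.pi_inv
  obtain ⟨_, _, hZ, -⟩ := h'.sigma_inv
  cases hZ

theorem not_conv_pi_of_isUniv {A B U : Term} (hU : IsUniv U) : ¬ Conv (.pi A B) U := by
  intro h
  obtain ⟨Z, h, h'⟩ := conv_iff_join.mp h
  obtain ⟨_, _, rfl, -⟩ := h.pi_inv
  obtain rfl := h'.eq_of_normal hU.normal
  rcases hU with h | ⟨_, h⟩ <;> cases h

end ECC

/-- convertibility of binder-headed types is componentwise:
`Qx:A.B ≃ Qx:A'.B'` iff `A ≃ A'` and `B ≃ B'` for `Q ∈ {Π,Σ}`; in particular a Π-type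
is never convertible to a Σ-type or to a universe. -/
theorem conv_binder_componentwise :
    (∀ A B A' B' : ECC.Term,
      ECC.Conv (.pi A B) (.pi A' B') ↔ ECC.Conv A A' ∧ ECC.Conv B B') ∧
    (∀ A B A' B' : ECC.Term,
      ECC.Conv (.sigma A B) (.sigma A' B') ↔ ECC.Conv A A' ∧ ECC.Conv B B') ∧
    (∀ A B A' B' : ECC.Term, ¬ ECC.Conv (.pi A B) (.sigma A' B')) ∧
    (∀ A B U : ECC.Term, ECC.IsUniv U → ¬ ECC.Conv (.pi A B) U) :=
  ⟨fun _ _ _ _ => ECC.conv_pi_iff, fun _ _ _ _ => ECC.conv_sigma_iff,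
    fun _ _ _ _ => ECC.not_conv_pi_sigma, fun _ _ _ => ECC.not_conv_pi_of_isUniv⟩
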